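/- arXiv:1801.01899 — 5 statements merged into one kernel-verified Lean document; each statement's English description precedes it below -/
import Mathlib

section
/- Let C = (b_i)_{i∈I} be a nonempty finite family of binary vectors in ℝ^d with centroid m. Then Σ_{i∈I} Σ_{j=1}^d genKL(b_i(j), m(j)) = −|I| · Σ_{j=1}^d m(j)·log m(j). In words: the K-means cost of a cluster of binary vectors under the coordinatewise generalized KL divergence to its centroid equals the cluster size times the negative sum of the coordinatewise p·log p terms of the centroid. -/
/-- The generalized Kullback–Leibler divergence
`genKL(s,t) = s·log(s/t) − s + t` (with Mathlib's conventions
`Real.log 0 = 0` and `x / 0 = 0`, so `genKL(0,t) = t` and `genKL(0,0) = 0`). -/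
noncomputable def genKL (s t : ℝ) : ℝ := s * Real.log (s / t) - s + t

/-- Let `C = (b i)_{i ∈ I}` be a nonempty finite family of
binary vectors in `ℝ^d` with centroid `m`.  Then the K-means cost of the
cluster under the coordinatewise generalized KL divergence to its centroid
equals `−|I| · ∑ j, m j · log (m j)`. -/
theorem cluster_genKL_cost_eq
    {I : Type*} [Fintype I] [Nonempty I] {d : ℕ}
    (b : I → Fin d → ℝ)
    (hb : ∀ i j, b i j = 0 ∨ b i j = 1)
    (m : Fin d → ℝ)
    (hm : ∀ j, m j = (∑ i, b i j) / (Fintype.card I : ℝ)) :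
    ∑ i, ∑ j, genKL (b i j) (m j) =
      -(Fintype.card I : ℝ) * ∑ j, m j * Real.log (m j) := by
  have hn : (0:ℝ) < (Fintype.card I : ℝ) := by
    exact_mod_cast Fintype.card_pos
  rw [Finset.sum_comm, Finset.mul_sum]
  refine Finset.sum_congr rfl fun j _ => ?_
  have key : ∀ i : I, genKL (b i j) (m j)
      = -(b i j) * Real.log (m j) - b i j + m j := by
    intro i
    rcases hb i j with h | h <;> simp [genKL, h, one_div, Real.log_inv]
  have hS : ∑ i, b i j = (Fintype.card I : ℝ) * m j := by
    rw [hm j]; field_simp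
  simp only [key, Finset.sum_add_distrib, Finset.sum_sub_distrib,
    Finset.sum_const, nsmul_eq_mul, ← Finset.sum_mul, Finset.sum_neg_distrib, hS, Finset.card_univ]
  ring
end

section
/- Let b : Fin n → ℝ^d be a family of binary vectors (n ≥ 1) and K ≥ 1. For an assignment σ : Fin n → Fin K all of whose clusters C_k = σ⁻¹(k) are nonempty, let m_k be the centroid of (b_i)_{i∈C_k}, let p_k = |C_k|/n, and define U(σ) = Σ_{k} p_k · Σ_{j=1}^d m_k(j)·log m_k(j) and F(σ) = Σ_{k} Σ_{i∈C_k} Σ_{j=1}^d genKL(b_i(j), m_k(j)). Then F(σ) = −n·U(σ); consequently, among all assignments with nonempty clusters, σ maximizes U if and only if σ minimizes F. -/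
/-- The cluster `C_k = σ⁻¹(k)` of an assignment `σ`. -/
def cluster {n K : ℕ} (σ : Fin n → Fin K) (k : Fin K) : Finset (Fin n) :=
  Finset.univ.filter (fun i => σ i = k)

/-- The centroid (arithmetic mean) of the `k`-th cluster of `b` under `σ`. -/
noncomputable def centroid {n d K : ℕ} (b : Fin n → Fin d → ℝ)
    (σ : Fin n → Fin K) (k : Fin K) (j : Fin d) : ℝ :=
  (∑ i ∈ cluster σ k, b i j) / ((cluster σ k).card : ℝ)

/-- `U(σ) = ∑ k, p_k · ∑ j, m_k(j) · log (m_k(j))`, where `p_k = |C_k| / n`. -/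
noncomputable def Uobj {n d K : ℕ} (b : Fin n → Fin d → ℝ)
    (σ : Fin n → Fin K) : ℝ :=
  ∑ k : Fin K, (((cluster σ k).card : ℝ) / (n : ℝ)) *
    ∑ j : Fin d, centroid b σ k j * Real.log (centroid b σ k j)

/-- `F(σ) = ∑ k, ∑ i ∈ C_k, ∑ j, genKL(b i j, m_k(j))`:
the K-means cost with coordinatewise generalized KL distance. -/
noncomputable def Fobj {n d K : ℕ} (b : Fin n → Fin d → ℝ)
    (σ : Fin n → Fin K) : ℝ :=
  ∑ k : Fin K, ∑ i ∈ cluster σ k, ∑ j : Fin d, genKL (b i j) (centroid b σ k j)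

lemma F_eq_neg_n_mul_U_aux
    {n d K : ℕ} (hn : 1 ≤ n)
    (b : Fin n → Fin d → ℝ)
    (hb : ∀ i j, b i j = 0 ∨ b i j = 1)
    (σ : Fin n → Fin K)
    (hσ : ∀ k, (cluster σ k).Nonempty) :
    Fobj b σ = -(n : ℝ) * Uobj b σ := by
  have hn' : (n : ℝ) ≠ 0 := by
    exact_mod_cast Nat.one_le_iff_ne_zero.mp hn
  unfold Fobj Uobj
  rw [Finset.mul_sum]
  apply Finset.sum_congr rfl
  intro k _
  have hc : ((cluster σ k).card : ℝ) ≠ 0 := by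
    exact_mod_cast (hσ k).card_pos.ne'
  rw [Finset.sum_comm]
  have hj : ∀ j : Fin d, ∑ i ∈ cluster σ k, genKL (b i j) (centroid b σ k j)
      = -((cluster σ k).card : ℝ) * (centroid b σ k j * Real.log (centroid b σ k j)) := by
    intro j
    set c : ℝ := ((cluster σ k).card : ℝ)
    set S : ℝ := ∑ i ∈ cluster σ k, b i j with hS
    have hm : centroid b σ k j = S / c := rfl
    have hcm : c * centroid b σ k j = S := by
      rw [hm]; field_simp
    have hterm : ∀ i ∈ cluster σ k, genKL (b i j) (centroid b σ k j)
        = -(b i j) * Real.log (centroid b σ k j) - b i j + centroid b σ k j := by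
      intro i _
      rcases hb i j with h | h <;> simp [genKL, h, Real.log_div, one_div, Real.log_inv]
    rw [Finset.sum_congr rfl hterm]
    simp only [Finset.sum_add_distrib, Finset.sum_sub_distrib, Finset.sum_const,
      nsmul_eq_mul, neg_mul, Finset.sum_neg_distrib, ← Finset.sum_mul, ← hS]
    rw [← hcm]
    ring
  rw [Finset.sum_congr rfl (fun j _ => hj j), ← Finset.mul_sum]
  field_simp

/-- Theorem 1 of the paper.  For binary data `b` and an
assignment `σ` with all clusters nonempty, `F(σ) = −n · U(σ)`; consequently,
among all assignments with nonempty clusters, `σ` maximizes `U` if and only if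
`σ` minimizes `F`. -/
theorem F_eq_neg_n_mul_U_and_max_iff_min
    {n d K : ℕ} (hn : 1 ≤ n) (hK : 1 ≤ K)
    (b : Fin n → Fin d → ℝ)
    (hb : ∀ i j, b i j = 0 ∨ b i j = 1)
    (σ : Fin n → Fin K)
    (hσ : ∀ k, (cluster σ k).Nonempty) :
    Fobj b σ = -(n : ℝ) * Uobj b σ ∧
      ((∀ τ : Fin n → Fin K, (∀ k, (cluster τ k).Nonempty) →
          Uobj b τ ≤ Uobj b σ) ↔
        (∀ τ : Fin n → Fin K, (∀ k, (cluster τ k).Nonempty) →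
          Fobj b σ ≤ Fobj b τ)) := by
  have key := fun (τ : Fin n → Fin K) (hτ : ∀ k, (cluster τ k).Nonempty) =>
    F_eq_neg_n_mul_U_aux hn b hb τ hτ
  have hn' : (0 : ℝ) < (n : ℝ) := by exact_mod_cast hn
  refine ⟨key σ hσ, ?_⟩
  constructor
  · intro h τ hτ
    rw [key σ hσ, key τ hτ]
    have := h τ hτ
    nlinarith
  · intro h τ hτ
    have := h τ hτ
    rw [key σ hσ, key τ hτ] at this
    nlinarith
end

section
/- Let C = (b_i)_{i∈I} be a nonempty finite family of binary vectors in ℝ^d with centroid m. Then Σ_{i∈I} Σ_{j=1}^d [ genKL(b_i(j), m(j)) + genKL(1 − b_i(j), 1 − m(j)) ] = |I| · Σ_{j=1}^d h(m(j)). In words: the K-means cost of a cluster of binary vectors under the augmented coordinatewise generalized KL distance (using each coordinate together with its complement) equals the cluster size times the sum of the binary entropies of the centroid coordinates. -/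
/-- The binary entropy function `h(p) = -p log p - (1-p) log (1-p)`. -/
noncomputable def binH (p : ℝ) : ℝ := -p * Real.log p - (1 - p) * Real.log (1 - p)

lemma genKL_binary (s t : ℝ) (hs : s = 0 ∨ s = 1) :
    genKL s t + genKL (1 - s) (1 - t) =
      -s * Real.log t - (1 - s) * Real.log (1 - t) := by
  rcases hs with h | h <;> subst h <;>
    simp [genKL, one_div, Real.log_inv] <;> ring

/-- the per-cluster identity underlying Theorem 2 of the
paper.  For a nonempty finite family of binary vectors with centroid `m`,
the K-means cost under the augmented coordinatewise generalized KL distance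
(each coordinate together with its complement) equals the cluster size times
the sum of the binary entropies of the centroid coordinates. -/
theorem cluster_augmented_genKL_cost_eq_card_mul_entropy
    {I : Type*} [Fintype I] [Nonempty I] {d : ℕ}
    (b : I → Fin d → ℝ)
    (hb : ∀ i j, b i j = 0 ∨ b i j = 1)
    (m : Fin d → ℝ)
    (hm : ∀ j, m j = (∑ i, b i j) / (Fintype.card I : ℝ)) :
    ∑ i, ∑ j, (genKL (b i j) (m j) + genKL (1 - b i j) (1 - m j)) =
      (Fintype.card I : ℝ) * ∑ j, binH (m j) := by
  have hn : (Fintype.card I : ℝ) ≠ 0 := by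
    exact_mod_cast Fintype.card_ne_zero
  rw [Finset.sum_comm, Finset.mul_sum]
  refine Finset.sum_congr rfl fun j _ => ?_
  have hS : ∑ i, b i j = (Fintype.card I : ℝ) * m j := by
    rw [hm j]; field_simp
  calc ∑ i, (genKL (b i j) (m j) + genKL (1 - b i j) (1 - m j))
      = ∑ i, (-(b i j) * Real.log (m j) - (1 - b i j) * Real.log (1 - m j)) := by
        refine Finset.sum_congr rfl fun i _ => ?_
        simpa using genKL_binary (b i j) (m j) (hb i j)
    _ = -(∑ i, b i j) * Real.log (m j)
        - ((Fintype.card I : ℝ) - ∑ i, b i j) * Real.log (1 - m j) := by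
        rw [Finset.sum_sub_distrib, ← Finset.sum_mul, ← Finset.sum_mul,
          Finset.sum_sub_distrib, Finset.sum_const, Finset.card_univ,
          nsmul_eq_mul, mul_one, Finset.sum_neg_distrib]
    _ = (Fintype.card I : ℝ) * binH (m j) := by
        rw [hS, binH]; ring
end

section
/- Let b : Fin n → ℝ^d be a family of binary vectors (n ≥ 1) and K ≥ 1. For an assignment σ : Fin n → Fin K all of whose clusters C_k = σ⁻¹(k) are nonempty, let m_k be the centroid of (b_i)_{i∈C_k}, let p_k = |C_k|/n, and define HL(σ) = Σ_{k} p_k · Σ_{j=1}^d h(m_k(j)) and G(σ) = Σ_{k} Σ_{i∈C_k} Σ_{j=1}^d [ genKL(b_i(j), m_k(j)) + genKL(1 − b_i(j), 1 − m_k(j)) ]. Then G(σ) = n·HL(σ); consequently, among all assignments with nonempty clusters, σ minimizes the weighted sum of per-attribute binary entropies HL if and only if σ minimizes the K-means objective G on the concatenated data consisting of each binary vector together with its coordinatewise complement. -/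
/-- `HL(σ) = ∑ k, p_k · ∑ j, h(m_k(j))`, the weighted sum of per-attribute
binary entropies (the weighted Holoentropy), where `p_k = |C_k| / n`. -/
noncomputable def HLobj {n d K : ℕ} (b : Fin n → Fin d → ℝ)
    (σ : Fin n → Fin K) : ℝ :=
  ∑ k : Fin K, (((cluster σ k).card : ℝ) / (n : ℝ)) *
    ∑ j : Fin d, binH (centroid b σ k j)

/-- `G(σ) = ∑ k, ∑ i ∈ C_k, ∑ j, [genKL(b i j, m_k j) + genKL(1 − b i j, 1 − m_k j)]`:
the K-means cost on the concatenated data `[B B̃]` (each binary vector together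
with its coordinatewise complement). -/
noncomputable def Gobj {n d K : ℕ} (b : Fin n → Fin d → ℝ)
    (σ : Fin n → Fin K) : ℝ :=
  ∑ k : Fin K, ∑ i ∈ cluster σ k, ∑ j : Fin d,
    (genKL (b i j) (centroid b σ k j) + genKL (1 - b i j) (1 - centroid b σ k j))


lemma pointwise_genKL_pair (f m : ℝ) (hf : f = 0 ∨ f = 1) :
    genKL f m + genKL (1 - f) (1 - m) =
      f * (-Real.log m) + (1 - f) * (-Real.log (1 - m)) := by
  rcases hf with h | h <;> subst h <;>
    simp [genKL, one_div, Real.log_inv] <;> ring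

lemma cluster_sum_eq_card_mul_binH {n d K : ℕ} (b : Fin n → Fin d → ℝ)
    (hb : ∀ i j, b i j = 0 ∨ b i j = 1) (σ : Fin n → Fin K) (k : Fin K)
    (hk : (cluster σ k).Nonempty) (j : Fin d) :
    ∑ i ∈ cluster σ k,
      (genKL (b i j) (centroid b σ k j) + genKL (1 - b i j) (1 - centroid b σ k j))
    = ((cluster σ k).card : ℝ) * binH (centroid b σ k j) := by
  have hc : ((cluster σ k).card : ℝ) ≠ 0 := by
    exact_mod_cast Finset.card_ne_zero.mpr hk
  set s : ℝ := ∑ i ∈ cluster σ k, b i j with hs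
  have hm : centroid b σ k j = s / ((cluster σ k).card : ℝ) := rfl
  rw [Finset.sum_congr rfl (fun i _ => pointwise_genKL_pair (b i j) _ (hb i j))]
  rw [Finset.sum_add_distrib, ← Finset.sum_mul, ← Finset.sum_mul]
  have h1 : ∑ i ∈ cluster σ k, (1 - b i j) = ((cluster σ k).card : ℝ) - s := by
    rw [Finset.sum_sub_distrib, Finset.sum_const, nsmul_eq_mul, mul_one]
  rw [h1, hm, binH]
  field_simp
  ring

/-- Theorem 2 of the paper.  For binary data `b` and an
assignment `σ` whose clusters are all nonempty, `G(σ) = n · HL(σ)`;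
consequently, among all assignments with nonempty clusters, `σ` minimizes the
weighted Holoentropy `HL` if and only if `σ` minimizes the K-means objective
`G` on the concatenated data. -/
theorem G_eq_n_mul_HL_and_min_iff_min
    {n d K : ℕ} (hn : 1 ≤ n) (hK : 1 ≤ K)
    (b : Fin n → Fin d → ℝ)
    (hb : ∀ i j, b i j = 0 ∨ b i j = 1)
    (σ : Fin n → Fin K)
    (hσ : ∀ k, (cluster σ k).Nonempty) :
    Gobj b σ = (n : ℝ) * HLobj b σ ∧
      ((∀ τ : Fin n → Fin K, (∀ k, (cluster τ k).Nonempty) →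
          HLobj b σ ≤ HLobj b τ) ↔
        (∀ τ : Fin n → Fin K, (∀ k, (cluster τ k).Nonempty) →
          Gobj b σ ≤ Gobj b τ)) := by
  have hn0 : (0 : ℝ) < (n : ℝ) := by exact_mod_cast hn
  have key : ∀ τ : Fin n → Fin K, (∀ k, (cluster τ k).Nonempty) →
      Gobj b τ = (n : ℝ) * HLobj b τ := by
    intro τ hτ
    unfold Gobj HLobj
    rw [Finset.mul_sum]
    refine Finset.sum_congr rfl (fun k _ => ?_)
    rw [Finset.sum_comm]
    rw [Finset.sum_congr rfl (fun j _ => cluster_sum_eq_card_mul_binH b hb τ k (hτ k) j)]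
    rw [← Finset.mul_sum]
    field_simp
  refine ⟨key σ hσ, ?_⟩
  constructor
  · intro h τ hτ
    rw [key σ hσ, key τ hτ]
    exact mul_le_mul_of_nonneg_left (h τ hτ) hn0.le
  · intro h τ hτ
    have := h τ hτ
    rw [key σ hσ, key τ hτ] at this
    exact le_of_mul_le_mul_left this hn0
end

section
/- Let I be a nonempty finite index set, b : I → ℝ^d with all coordinates nonnegative, K ≥ 1, and a : I → Fin K an assignment all of whose clusters C_k = a⁻¹(k) are nonempty. Let t : Fin K → ℝ^d be any centers with strictly positive coordinates, and let m_k be the centroid of (b_i)_{i∈C_k}. Then Σ_{i∈I} Σ_{j=1}^d genKL(b_i(j), m_{a(i)}(j)) ≤ Σ_{i∈I} Σ_{j=1}^d genKL(b_i(j), t_{a(i)}(j)); that is, replacing each cluster's center by the cluster's arithmetic mean does not increase the total coordinatewise generalized KL cost. -/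
open Finset Real InformationTheory

@[simp]
lemma genKL_zero_left (t : ℝ) : genKL 0 t = t := by
  simp [genKL]

lemma genKL_eq_mul_klFun {s t : ℝ} (ht : t ≠ 0) : genKL s t = t * klFun (s / t) := by
  rw [genKL, klFun_apply]
  field_simp
  ring

lemma genKL_nonneg {s t : ℝ} (hs : 0 ≤ s) (ht : 0 < t) : 0 ≤ genKL s t := by
  rw [genKL_eq_mul_klFun ht.ne']
  exact mul_nonneg ht.le (klFun_nonneg (div_nonneg hs ht.le))

lemma genKL_eq_of_ne_zero (s : ℝ) {t : ℝ} (ht : t ≠ 0) :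
    genKL s t = s * log s - s * log t - s + t := by
  rcases eq_or_ne s 0 with rfl | hs
  · simp
  · rw [genKL, log_div hs ht]
    ring

lemma sum_genKL_eq_of_ne_zero {ι : Type*} (s : Finset ι) (f : ι → ℝ) {t : ℝ}
    (ht : t ≠ 0) :
    ∑ i ∈ s, genKL (f i) t =
      ∑ i ∈ s, f i * log (f i) - (∑ i ∈ s, f i) * log t - ∑ i ∈ s, f i + #s * t := by
  simp only [genKL_eq_of_ne_zero _ ht, sum_add_distrib, sum_sub_distrib, sum_mul, sum_const,
    nsmul_eq_mul]

lemma sum_genKL_eq_sum_genKL_mean_add {ι : Type*} (s : Finset ι) (f : ι → ℝ)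
    (hf : ∀ i ∈ s, 0 ≤ f i) {t : ℝ} (ht : t ≠ 0) :
    ∑ i ∈ s, genKL (f i) t =
      ∑ i ∈ s, genKL (f i) ((∑ i ∈ s, f i) / #s) +
        #s * genKL ((∑ i ∈ s, f i) / #s) t := by
  generalize hμ_def : (∑ i ∈ s, f i) / #s = μ
  rcases eq_or_ne μ 0 with hμ | hμ
  · have hf_zero : ∀ i ∈ s, f i = 0 := by
      rcases div_eq_zero_iff.1 (hμ_def.trans hμ) with hsum | hcard
      · exact (sum_eq_zero_iff_of_nonneg hf).1 hsum
      · simp_all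
    have hsum : ∀ x, ∑ i ∈ s, genKL (f i) x = #s * x := fun x => by
      rw [sum_congr rfl fun i hi => by rw [hf_zero i hi, genKL_zero_left], sum_const, nsmul_eq_mul]
    rw [hμ, hsum, hsum]
    simp
  · have hmean : (#s : ℝ) * μ = ∑ i ∈ s, f i := by
      rw [← hμ_def, mul_div_cancel₀ _ (div_ne_zero_iff.1 (hμ_def.trans_ne hμ)).2]
    rw [sum_genKL_eq_of_ne_zero s f ht, sum_genKL_eq_of_ne_zero s f hμ,
      genKL_eq_of_ne_zero μ ht]
    linear_combination (log t - log μ) * hmean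

lemma sum_genKL_mean_le {ι : Type*} (s : Finset ι) (f : ι → ℝ) (hf : ∀ i ∈ s, 0 ≤ f i)
    {t : ℝ} (ht : 0 < t) :
    ∑ i ∈ s, genKL (f i) ((∑ i ∈ s, f i) / #s) ≤ ∑ i ∈ s, genKL (f i) t := by
  rw [sum_genKL_eq_sum_genKL_mean_add s f hf ht.ne']
  have hμ : 0 ≤ (∑ i ∈ s, f i) / #s := div_nonneg (sum_nonneg hf) (Nat.cast_nonneg _)
  exact le_add_of_nonneg_right (mul_nonneg (Nat.cast_nonneg _) (genKL_nonneg hμ ht))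

lemma Finset.sum_fiberwise_apply {ι κ M : Type*} [Fintype κ] [DecidableEq κ] [AddCommMonoid M]
    (s : Finset ι) (g : ι → κ) (f : ι → κ → M) :
    ∑ k, ∑ i ∈ s with g i = k, f i k = ∑ i ∈ s, f i (g i) := by
  rw [← sum_fiberwise s g fun i => f i (g i)]
  exact sum_congr rfl fun k _ => sum_congr rfl fun i hi => by rw [(mem_filter.1 hi).2]

theorem centroid_update_monotone_general
    {I : Type*} [Fintype I] {d K : ℕ}
    (b : I → Fin d → ℝ) (hb : ∀ i j, 0 ≤ b i j)
    (a : I → Fin K)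
    (t : Fin K → Fin d → ℝ) (ht : ∀ k j, 0 < t k j)
    (m : Fin K → Fin d → ℝ)
    (hm : ∀ k j, m k j =
      (∑ i ∈ Finset.univ.filter (fun i => a i = k), b i j) /
        ((Finset.univ.filter (fun i => a i = k)).card : ℝ)) :
    ∑ i, ∑ j, genKL (b i j) (m (a i) j) ≤
      ∑ i, ∑ j, genKL (b i j) (t (a i) j) := by
  rw [← sum_fiberwise_apply univ a fun i k => ∑ j, genKL (b i j) (m k j),
    ← sum_fiberwise_apply univ a fun i k => ∑ j, genKL (b i j) (t k j)]
  refine sum_le_sum fun k _ => ?_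
  rw [sum_comm, sum_comm (s := univ.filter _)]
  refine sum_le_sum fun j _ => ?_
  rw [hm k j]
  exact sum_genKL_mean_le _ (fun i => b i j) (fun i _ => hb i j) (ht k j)

/-- centroid-update monotonicity step in the proof of
Theorem 3 of the paper.  Let `b : I → ℝ^d` have nonnegative coordinates, let
`a : I → Fin K` be an assignment all of whose clusters are nonempty, let `t`
be any centers with strictly positive coordinates, and let `m k` be the
centroid of cluster `k`.  Then replacing each cluster's center by the
cluster's arithmetic mean does not increase the total coordinatewise
generalized KL cost. -/
theorem centroid_update_monotone
    {I : Type*} [Fintype I] [Nonempty I] {d K : ℕ} (hK : 1 ≤ K)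
    (b : I → Fin d → ℝ) (hb : ∀ i j, 0 ≤ b i j)
    (a : I → Fin K)
    (hne : ∀ k : Fin K, ∃ i, a i = k)
    (t : Fin K → Fin d → ℝ) (ht : ∀ k j, 0 < t k j)
    (m : Fin K → Fin d → ℝ)
    (hm : ∀ k j, m k j =
      (∑ i ∈ Finset.univ.filter (fun i => a i = k), b i j) /
        ((Finset.univ.filter (fun i => a i = k)).card : ℝ)) :
    ∑ i, ∑ j, genKL (b i j) (m (a i) j) ≤
      ∑ i, ∑ j, genKL (b i j) (t (a i) j) :=
  centroid_update_monotone_general b hb a t ht m hm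
end
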